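/- Let p be an odd prime and consider the permutations of ℤ_4 × ℤ_{2p} given by μ(i,j) = (i+1,j), σν(i,j) = (-i,j+1), and τ(i,j) = (-i,-j), and let H = ⟨μ, σν, τ⟩, a subgroup of the symmetric group on ℤ_4 × ℤ_{2p}. Then the minimal normal subgroups of H are exactly ⟨μ²⟩ and ⟨ν²⟩, where μ² is the permutation (i,j) ↦ (i+2,j) and ν² is (i,j) ↦ (i,j+2). -/

import Mathlib

open SimpleGraph

namespace OG4

variable {V : Type*} {W : Type*}

/-! ### Normal quotients, cycles, and basic pairs -/

/-- The setoid of orbits of a group `N` of permutations of `V`. -/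
def orbitSetoid (N : Subgroup (Equiv.Perm V)) : Setoid V := MulAction.orbitRel N V

/-- The (normal) quotient graph of a graph `Γ` with respect to a group `N` of permutations:
its vertices are the `N`-orbits, two distinct orbits being adjacent iff some vertex of one is
adjacent in `Γ` to some vertex of the other. -/
def quotientGraph (Γ : SimpleGraph V) (N : Subgroup (Equiv.Perm V)) :
    SimpleGraph (Quotient (orbitSetoid N)) :=
  SimpleGraph.fromRel fun a b =>
    ∃ x y : V, Quotient.mk (orbitSetoid N) x = a ∧ Quotient.mk (orbitSetoid N) y = b ∧ Γ.Adj x y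

/-- `N` is a normal subgroup of the subgroup `G` (of some ambient group). -/
def NormalIn {G : Type*} [Group G] (N H : Subgroup G) : Prop :=
  N ≤ H ∧ ∀ h ∈ H, ∀ n ∈ N, h * n * h⁻¹ ∈ N

/-- A graph is isomorphic to a cycle graph `C_m` for some `m ≥ 3`. -/
def IsoCycle (Δ : SimpleGraph W) : Prop :=
  ∃ m : ℕ, 3 ≤ m ∧ Nonempty (Δ ≃g SimpleGraph.cycleGraph m)

/-- Every normal quotient of `(Γ, G)` relative to a nontrivial normal subgroup is degenerate:
it has at most 2 vertices or is a cycle. -/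
def IsBasic (Γ : SimpleGraph V) (G : Subgroup (Equiv.Perm V)) : Prop :=
  ∀ N : Subgroup (Equiv.Perm V), NormalIn N G → N ≠ ⊥ →
    Nat.card (Quotient (orbitSetoid N)) ≤ 2 ∨ IsoCycle (quotientGraph Γ N)

/-- `(Γ, G)` is basic of cycle type. -/
def BasicOfCycleType (Γ : SimpleGraph V) (G : Subgroup (Equiv.Perm V)) : Prop :=
  IsBasic Γ G ∧
    ∃ N : Subgroup (Equiv.Perm V), NormalIn N G ∧ N ≠ ⊥ ∧ IsoCycle (quotientGraph Γ N)

/-- The kernel of the action of `G` on the set of `N`-orbits. -/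
def orbitKernel (G N : Subgroup (Equiv.Perm V)) : Subgroup (Equiv.Perm V) where
  carrier := {g | g ∈ G ∧ ∀ x : V,
    Quotient.mk (orbitSetoid N) (g x) = Quotient.mk (orbitSetoid N) x}
  one_mem' := ⟨G.one_mem, fun x => by simp⟩
  mul_mem' := by
    rintro a b ⟨haG, ha⟩ ⟨hbG, hb⟩
    refine ⟨G.mul_mem haG hbG, fun x => ?_⟩
    rw [Equiv.Perm.mul_apply, ha (b x), hb x]
  inv_mem' := by
    rintro a ⟨haG, ha⟩
    refine ⟨G.inv_mem haG, fun x => ?_⟩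
    have h := ha (a⁻¹ x)
    rw [show a (a⁻¹ x) = x by simp] at h
    exact h.symm

/-- `(Γ, G)` has a pair of independent cyclic normal quotients. -/
def HasIndepCyclicQuotients (Γ : SimpleGraph V) (G : Subgroup (Equiv.Perm V)) : Prop :=
  ∃ N M : Subgroup (Equiv.Perm V), NormalIn N G ∧ NormalIn M G ∧
    IsoCycle (quotientGraph Γ N) ∧ IsoCycle (quotientGraph Γ M) ∧
    ¬ IsoCycle (quotientGraph Γ (orbitKernel G N ⊓ orbitKernel G M))

/-- `(Γ, G)` is basic of independent-cycle type. -/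
def BasicOfIndependentCycleType (Γ : SimpleGraph V) (G : Subgroup (Equiv.Perm V)) : Prop :=
  IsBasic Γ G ∧ HasIndepCyclicQuotients Γ G

/-- Isomorphism of graph-group pairs: a graph isomorphism conjugating one group onto the other. -/
def PairIso (Γ : SimpleGraph V) (G : Subgroup (Equiv.Perm V))
    (Δ : SimpleGraph W) (H : Subgroup (Equiv.Perm W)) : Prop :=
  ∃ e : Γ ≃g Δ, ∀ h : Equiv.Perm W, h ∈ H ↔ ∃ g ∈ G, e.toEquiv.permCongr g = h

/-! ### Minimal normal subgroups -/

/-- `M` is a minimal normal subgroup of the ambient group. -/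
def IsMinimalNormal {G : Type*} [Group G] (M : Subgroup G) : Prop :=
  M.Normal ∧ M ≠ ⊥ ∧ ∀ N : Subgroup G, N.Normal → N ≤ M → N = ⊥ ∨ N = M

/-- `M` is a minimal normal subgroup of the subgroup `H`. -/
def IsMinimalNormalIn {G : Type*} [Group G] (M H : Subgroup G) : Prop :=
  NormalIn M H ∧ M ≠ ⊥ ∧ ∀ N : Subgroup G, NormalIn N H → N ≤ M → N = ⊥ ∨ N = M

/-! ### The graphs `Γ(r,s)` and their automorphisms -/

/-- In `Γ(r,s)`, the vertex `(i,j)` is joined to the four vertices `(i ± 1, j ± 1)`. -/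
def gammaRel (r s : ℕ) (x y : ZMod r × ZMod s) : Prop :=
  (y.1 = x.1 + 1 ∨ y.1 = x.1 - 1) ∧ (y.2 = x.2 + 1 ∨ y.2 = x.2 - 1)

/-- The graph `Γ(r,s)` on `ℤ_r × ℤ_s`. -/
def Gamma (r s : ℕ) : SimpleGraph (ZMod r × ZMod s) := SimpleGraph.fromRel (gammaRel r s)

/-- `μ : (i,j) ↦ (i+1, j)`. -/
def mu (r s : ℕ) : Equiv.Perm (ZMod r × ZMod s) :=
  (Equiv.addRight (1 : ZMod r)).prodCongr (Equiv.refl (ZMod s))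

/-- `ν : (i,j) ↦ (i, j+1)`. -/
def nu (r s : ℕ) : Equiv.Perm (ZMod r × ZMod s) :=
  (Equiv.refl (ZMod r)).prodCongr (Equiv.addRight (1 : ZMod s))

/-- `σ : (i,j) ↦ (-i, j)`. -/
def sigma (r s : ℕ) : Equiv.Perm (ZMod r × ZMod s) :=
  (Equiv.neg (ZMod r)).prodCongr (Equiv.refl (ZMod s))

/-- `τ : (i,j) ↦ (-i, -j)`. -/
def tau (r s : ℕ) : Equiv.Perm (ZMod r × ZMod s) :=
  (Equiv.neg (ZMod r)).prodCongr (Equiv.neg (ZMod s))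

/-- `σν : (i,j) ↦ (-i, j+1)`. -/
def sigmaNu (r s : ℕ) : Equiv.Perm (ZMod r × ZMod s) :=
  (Equiv.neg (ZMod r)).prodCongr (Equiv.addRight (1 : ZMod s))

/-- `μν : (i,j) ↦ (i+1, j+1)`. -/
def muNu (r s : ℕ) : Equiv.Perm (ZMod r × ZMod s) :=
  (Equiv.addRight (1 : ZMod r)).prodCongr (Equiv.addRight (1 : ZMod s))

/-- `σμν : (i,j) ↦ (-(i+1), j+1)`. -/
def sigmaMuNu (r s : ℕ) : Equiv.Perm (ZMod r × ZMod s) :=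
  ((Equiv.addRight (1 : ZMod r)).trans (Equiv.neg (ZMod r))).prodCongr
    (Equiv.addRight (1 : ZMod s))

/-- `μ² : (i,j) ↦ (i+2, j)`. -/
def muSq (r s : ℕ) : Equiv.Perm (ZMod r × ZMod s) :=
  (Equiv.addRight (2 : ZMod r)).prodCongr (Equiv.refl (ZMod s))

/-- `ν² : (i,j) ↦ (i, j+2)`. -/
def nuSq (r s : ℕ) : Equiv.Perm (ZMod r × ZMod s) :=
  (Equiv.refl (ZMod r)).prodCongr (Equiv.addRight (2 : ZMod s))

/-- `μ^k : (i,j) ↦ (i+k, j)`. -/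
def muPow (r s k : ℕ) : Equiv.Perm (ZMod r × ZMod s) :=
  (Equiv.addRight ((k : ZMod r))).prodCongr (Equiv.refl (ZMod s))

/-- `μ^k ν² : (i,j) ↦ (i+k, j+2)`. -/
def muPowNuSq (r s k : ℕ) : Equiv.Perm (ZMod r × ZMod s) :=
  (Equiv.addRight ((k : ZMod r))).prodCongr (Equiv.addRight (2 : ZMod s))

/-- `G(r,s) = ⟨μ, ν, σ⟩`. -/
def Ggroup (r s : ℕ) : Subgroup (Equiv.Perm (ZMod r × ZMod s)) :=
  Subgroup.closure {mu r s, nu r s, sigma r s}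

/-- `H(r,s) = ⟨μ, σν, τ⟩`. -/
def Hgroup (r s : ℕ) : Subgroup (Equiv.Perm (ZMod r × ZMod s)) :=
  Subgroup.closure {mu r s, sigmaNu r s, tau r s}

/-! ### The graphs `Γ⁺(r,s)` (for `r`, `s` even) -/

/-- `X⁺`: the set of `(i,j)` with `i` and `j` of the same parity. -/
def XPlus (r s : ℕ) : Set (ZMod r × ZMod s) := {x | x.1.val % 2 = x.2.val % 2}

/-- `Γ⁺(r,s)`, the subgraph of `Γ(r,s)` induced on `X⁺`. -/
def GammaPlus (r s : ℕ) : SimpleGraph (XPlus r s) :=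
  SimpleGraph.induce (XPlus r s) (Gamma r s)

section parity

lemma val_add_one_mod_two (r : ℕ) (hr : 2 ∣ r) (hr0 : r ≠ 0) (i : ZMod r) :
    (i + 1).val % 2 = (i.val + 1) % 2 := by
  haveI : NeZero r := ⟨hr0⟩
  haveI : Fact (1 < r) := ⟨by have := Nat.le_of_dvd (Nat.pos_of_ne_zero hr0) hr; omega⟩
  rw [ZMod.val_add, Nat.mod_mod_of_dvd _ hr, ZMod.val_one]

lemma val_add_two_mod_two (r : ℕ) (hr : 2 ∣ r) (hr0 : r ≠ 0) (i : ZMod r) :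
    (i + 2).val % 2 = i.val % 2 := by
  have h1 := val_add_one_mod_two r hr hr0 i
  have h2 := val_add_one_mod_two r hr hr0 (i + 1)
  rw [show i + 1 + 1 = i + 2 by ring] at h2
  omega

lemma val_neg_mod_two (r : ℕ) (hr : 2 ∣ r) (hr0 : r ≠ 0) (i : ZMod r) :
    (-i).val % 2 = i.val % 2 := by
  haveI : NeZero r := ⟨hr0⟩
  rcases eq_or_ne i 0 with h | h
  · simp [h]
  · have h1 : (-i).val = r - i.val := by rw [ZMod.neg_val]; simp [h]
    have h2 : i.val < r := ZMod.val_lt i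
    have h3 : i.val ≠ 0 := fun hh => h ((ZMod.val_eq_zero i).mp hh)
    obtain ⟨t, rfl⟩ := hr
    rw [h1]
    omega

end parity

section plusPerms

variable (r s : ℕ)

/-- The restriction of `μ²` to `X⁺`. -/
def muSqP (hr : 2 ∣ r) (hr0 : r ≠ 0) : Equiv.Perm (XPlus r s) :=
  (muSq r s).subtypePerm (by
    intro x
    have h := val_add_two_mod_two r hr hr0 x.1
    simp only [XPlus, Set.mem_setOf_eq, muSq, Equiv.prodCongr_apply, Prod.map,
      Equiv.coe_addRight, Equiv.refl_apply]
    omega)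

/-- The restriction of `ν²` to `X⁺`. -/
def nuSqP (hs : 2 ∣ s) (hs0 : s ≠ 0) : Equiv.Perm (XPlus r s) :=
  (nuSq r s).subtypePerm (by
    intro x
    have h := val_add_two_mod_two s hs hs0 x.2
    simp only [XPlus, Set.mem_setOf_eq, nuSq, Equiv.prodCongr_apply, Prod.map,
      Equiv.coe_addRight, Equiv.refl_apply]
    omega)

/-- The restriction of `μν` to `X⁺`. -/
def muNuP (hr : 2 ∣ r) (hr0 : r ≠ 0) (hs : 2 ∣ s) (hs0 : s ≠ 0) : Equiv.Perm (XPlus r s) :=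
  (muNu r s).subtypePerm (by
    intro x
    have h1 := val_add_one_mod_two r hr hr0 x.1
    have h2 := val_add_one_mod_two s hs hs0 x.2
    simp only [XPlus, Set.mem_setOf_eq, muNu, Equiv.prodCongr_apply, Prod.map,
      Equiv.coe_addRight]
    omega)

/-- The restriction of `σ` to `X⁺`. -/
def sigmaP (hr : 2 ∣ r) (hr0 : r ≠ 0) : Equiv.Perm (XPlus r s) :=
  (sigma r s).subtypePerm (by
    intro x
    have h := val_neg_mod_two r hr hr0 x.1
    simp only [XPlus, Set.mem_setOf_eq, sigma, Equiv.prodCongr_apply, Prod.map,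
      Equiv.neg_apply, Equiv.refl_apply]
    omega)

/-- The restriction of `τ` to `X⁺`. -/
def tauP (hr : 2 ∣ r) (hr0 : r ≠ 0) (hs : 2 ∣ s) (hs0 : s ≠ 0) : Equiv.Perm (XPlus r s) :=
  (tau r s).subtypePerm (by
    intro x
    have h1 := val_neg_mod_two r hr hr0 x.1
    have h2 := val_neg_mod_two s hs hs0 x.2
    simp only [XPlus, Set.mem_setOf_eq, tau, Equiv.prodCongr_apply, Prod.map,
      Equiv.neg_apply]
    omega)

/-- The restriction of `σμν` to `X⁺`. -/
def sigmaMuNuP (hr : 2 ∣ r) (hr0 : r ≠ 0) (hs : 2 ∣ s) (hs0 : s ≠ 0) :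
    Equiv.Perm (XPlus r s) :=
  (sigmaMuNu r s).subtypePerm (by
    intro x
    have h1 := val_neg_mod_two r hr hr0 (x.1 + 1)
    have h2 := val_add_one_mod_two r hr hr0 x.1
    have h3 := val_add_one_mod_two s hs hs0 x.2
    simp only [XPlus, Set.mem_setOf_eq, sigmaMuNu, Equiv.prodCongr_apply, Prod.map,
      Equiv.trans_apply, Equiv.coe_addRight, Equiv.neg_apply]
    omega)

/-- `G⁺(r,s) = ⟨μ², μν, σ⟩` acting on `X⁺`. -/
def GPlusGroup (hr : 2 ∣ r) (hr0 : r ≠ 0) (hs : 2 ∣ s) (hs0 : s ≠ 0) :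
    Subgroup (Equiv.Perm (XPlus r s)) :=
  Subgroup.closure {muSqP r s hr hr0, muNuP r s hr hr0 hs hs0, sigmaP r s hr hr0}

/-- `H⁺(r,s) = ⟨μ², σμν, τ⟩` acting on `X⁺`. -/
def HPlusGroup (hr : 2 ∣ r) (hr0 : r ≠ 0) (hs : 2 ∣ s) (hs0 : s ≠ 0) :
    Subgroup (Equiv.Perm (XPlus r s)) :=
  Subgroup.closure
    {muSqP r s hr hr0, sigmaMuNuP r s hr hr0 hs hs0, tauP r s hr hr0 hs hs0}

end plusPerms

/-! ### The standard double cover `Γ₂(r,s)` -/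

/-- Adjacency of the double cover: `(i,j)_δ ~ (i ± 1, j ± 1)_{δ+1}`. -/
def gamma2Rel (r s : ℕ) (x y : (ZMod r × ZMod s) × ZMod 2) : Prop :=
  (y.1.1 = x.1.1 + 1 ∨ y.1.1 = x.1.1 - 1) ∧ (y.1.2 = x.1.2 + 1 ∨ y.1.2 = x.1.2 - 1) ∧
    y.2 = x.2 + 1

/-- `Γ₂(r,s)`, the standard double cover of `Γ(r,s)`. -/
def Gamma2 (r s : ℕ) : SimpleGraph ((ZMod r × ZMod s) × ZMod 2) :=
  SimpleGraph.fromRel (gamma2Rel r s)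

/-- `μ : (i,j)_δ ↦ (i+1, j)_δ` on the double cover. -/
def muD (r s : ℕ) : Equiv.Perm ((ZMod r × ZMod s) × ZMod 2) :=
  (mu r s).prodCongr (Equiv.refl (ZMod 2))

/-- `ν : (i,j)_δ ↦ (i, j+1)_δ` on the double cover. -/
def nuD (r s : ℕ) : Equiv.Perm ((ZMod r × ZMod s) × ZMod 2) :=
  (nu r s).prodCongr (Equiv.refl (ZMod 2))

/-- `σ : (i,j)_δ ↦ (i, -j)_{δ+1}` on the double cover. -/
def sigmaD (r s : ℕ) : Equiv.Perm ((ZMod r × ZMod s) × ZMod 2) :=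
  ((Equiv.refl (ZMod r)).prodCongr (Equiv.neg (ZMod s))).prodCongr
    (Equiv.addRight (1 : ZMod 2))

/-- `τ : (i,j)_δ ↦ (-i, -j)_δ` on the double cover. -/
def tauD (r s : ℕ) : Equiv.Perm ((ZMod r × ZMod s) × ZMod 2) :=
  (tau r s).prodCongr (Equiv.refl (ZMod 2))

/-- `G₂(r,s) = ⟨μ, ν, σ, τ⟩` on the double cover. -/
def G2group (r s : ℕ) : Subgroup (Equiv.Perm ((ZMod r × ZMod s) × ZMod 2)) :=
  Subgroup.closure {muD r s, nuD r s, sigmaD r s, tauD r s}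

/-!
The group `H = H(4,2p)` consists of maps `(i,j) ↦ (ε i + c, η j + d)` with signs `ε, η` and
`d ≡ [ε ≠ η] (mod 2)`. The subgroups `⟨μ²⟩` and `⟨ν²⟩` have prime orders `2` and `p` and are
normalized by every such map, so they are minimal normal. Conversely, a nontrivial normal
subgroup `N` contains some `g ≠ 1`: if `ε = -1` then `⁅μ, g⁆ = μ²`; if `η = -1` then
`⁅ν², g⁆ = ν⁴`; if `g` is a translation by `(c, d)`, then `d` is even, and either `d = 0` and a
power of `g` is `μ²`, or a commutator of `g` is the translation by `(0, 2d) ≠ 0`, which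
generates `⟨ν²⟩`. So `N` contains `μ²` or `ν²`.
-/

open scoped commutatorElement

section PrimeOrder

variable {G : Type*} [Group G] {H M N : Subgroup G} {g x : G}

lemma eq_bot_or_eq_zpowers_of_le_zpowers (hg : (orderOf g).Prime)
    (hN : N ≤ Subgroup.zpowers g) : N = ⊥ ∨ N = Subgroup.zpowers g := by
  have : Fact (Nat.card (Subgroup.zpowers g)).Prime := ⟨(Nat.card_zpowers g).symm ▸ hg⟩
  exact (N.subgroupOf (Subgroup.zpowers g)).eq_bot_or_eq_top_of_prime_card.imp
    (fun h => (Subgroup.subgroupOf_eq_bot.mp h).eq_bot_of_le hN)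
    (fun h => le_antisymm hN (Subgroup.subgroupOf_eq_top.mp h))

lemma mem_zpowers_of_mem_zpowers (hg : (orderOf g).Prime) (hx : x ∈ Subgroup.zpowers g)
    (hx1 : x ≠ 1) : g ∈ Subgroup.zpowers x := by
  rcases eq_bot_or_eq_zpowers_of_le_zpowers hg (Subgroup.zpowers_le.mpr hx) with h | h
  · exact absurd h (Subgroup.zpowers_ne_bot.mpr hx1)
  · exact h ▸ Subgroup.mem_zpowers g

lemma normalIn_zpowers (hg : g ∈ H) (hconj : ∀ h ∈ H, h * g * h⁻¹ ∈ Subgroup.zpowers g) :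
    NormalIn (Subgroup.zpowers g) H := by
  refine ⟨Subgroup.zpowers_le.mpr hg, fun h hh n hn => ?_⟩
  obtain ⟨k, rfl⟩ := Subgroup.mem_zpowers_iff.mp hn
  rw [← conj_zpow]
  exact zpow_mem (hconj h hh) k

lemma isMinimalNormalIn_zpowers (hg : (orderOf g).Prime) (hn : NormalIn (Subgroup.zpowers g) H) :
    IsMinimalNormalIn (Subgroup.zpowers g) H :=
  ⟨hn, Subgroup.zpowers_ne_bot.mpr fun h => Nat.not_prime_one (by simpa [h] using hg),
    fun _ _ hle => eq_bot_or_eq_zpowers_of_le_zpowers hg hle⟩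

lemma IsMinimalNormalIn.eq_zpowers (hM : IsMinimalNormalIn M H)
    (hn : NormalIn (Subgroup.zpowers g) H) (hgM : g ∈ M) (hg1 : g ≠ 1) :
    M = Subgroup.zpowers g :=
  ((hM.2.2 _ hn (Subgroup.zpowers_le.mpr hgM)).resolve_left
    (Subgroup.zpowers_ne_bot.mpr hg1)).symm

lemma NormalIn.commutatorElement_mem_left (hN : NormalIn N H) {h : G} (hh : h ∈ H)
    (hg : g ∈ N) : ⁅h, g⁆ ∈ N := by
  rw [commutatorElement_def]
  exact mul_mem (hN.2 h hh g hg) (inv_mem hg)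

lemma NormalIn.commutatorElement_mem_right (hN : NormalIn N H) {h : G} (hh : h ∈ H)
    (hg : g ∈ N) : ⁅g, h⁆ ∈ N := by
  rw [← commutatorElement_inv]
  exact inv_mem (hN.commutatorElement_mem_left hh hg)

end PrimeOrder

section SignedAffine

variable {A B : Type*} [AddCommGroup A] [AddCommGroup B]

def signedAffine (ε η : ℤˣ) (c : A) (d : B) : Equiv.Perm (A × B) :=
  ((MulAction.toPerm ε).trans (Equiv.addRight c)).prodCongr
    ((MulAction.toPerm η).trans (Equiv.addRight d))

@[simp]
lemma signedAffine_apply (ε η : ℤˣ) (c : A) (d : B) (x : A × B) :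
    signedAffine ε η c d x = (ε • x.1 + c, η • x.2 + d) :=
  rfl

lemma signedAffine_one_one (c : A) (d : B) : signedAffine 1 1 c d = Equiv.addRight (c, d) := by
  ext x <;> simp

lemma signedAffine_mul (ε η ε' η' : ℤˣ) (c c' : A) (d d' : B) :
    signedAffine ε η c d * signedAffine ε' η' c' d' =
      signedAffine (ε * ε') (η * η') (ε • c' + c) (η • d' + d) := by
  ext x <;> simp [smul_add, mul_smul, add_assoc]

lemma signedAffine_inv (ε η : ℤˣ) (c : A) (d : B) :
    (signedAffine ε η c d)⁻¹ = signedAffine ε η (-(ε • c)) (-(η • d)) := by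
  refine inv_eq_of_mul_eq_one_right ?_
  rw [signedAffine_mul]
  simp [smul_neg, ← mul_smul, signedAffine_one_one, Prod.mk_zero_zero]

lemma signedAffine_conj_addRight (ε η : ℤˣ) (c a : A) (d b : B) :
    signedAffine ε η c d * Equiv.addRight (a, b) * (signedAffine ε η c d)⁻¹ =
      Equiv.addRight (ε • a, η • b) := by
  rw [mul_inv_eq_iff_eq_mul]
  ext x <;> simp [smul_add, add_right_comm]

lemma commutatorElement_addRight_signedAffine (ε η : ℤˣ) (a c : A) (b d : B) :
    ⁅Equiv.addRight (a, b), signedAffine ε η c d⁆ =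
      Equiv.addRight (a - ε • a, b - η • b) := by
  rw [commutatorElement_def, mul_assoc, mul_assoc, ← mul_assoc (signedAffine ε η c d),
    Equiv.neg_addRight, Prod.neg_mk, signedAffine_conj_addRight, ← Equiv.addRight_add]
  simp [sub_eq_neg_add]

lemma addRight_eq_one_iff {v : A} : Equiv.addRight v = 1 ↔ v = 0 :=
  ⟨fun h => by simpa using Equiv.ext_iff.mp h 0, fun h => h ▸ Equiv.addRight_zero⟩

end SignedAffine

section Hgroup

variable {r s : ℕ}

lemma mu_eq : mu r s = Equiv.addRight (1, 0) := by
  ext x <;> simp [mu]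

lemma sigmaNu_eq : sigmaNu r s = signedAffine (-1) 1 0 1 := by
  ext x <;> simp [sigmaNu]

lemma tau_eq : tau r s = signedAffine (-1) (-1) 0 0 := by
  ext x <;> simp [tau]

lemma muSq_eq : muSq r s = Equiv.addRight (2, 0) := by
  ext x <;> simp [muSq]

lemma nuSq_eq : nuSq r s = Equiv.addRight (0, 2) := by
  ext x <;> simp [nuSq]

lemma mu_mem : mu r s ∈ Hgroup r s :=
  Subgroup.subset_closure (by simp)

lemma sigmaNu_mem : sigmaNu r s ∈ Hgroup r s :=
  Subgroup.subset_closure (by simp)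

lemma tau_mem : tau r s ∈ Hgroup r s :=
  Subgroup.subset_closure (by simp)

lemma muSq_mem : muSq r s ∈ Hgroup r s := by
  have h : mu r s * mu r s = muSq r s := by
    rw [mu_eq, muSq_eq, ← Equiv.addRight_add]
    norm_num
  exact h ▸ mul_mem mu_mem mu_mem

lemma nuSq_mem : nuSq r s ∈ Hgroup r s := by
  have h : sigmaNu r s * sigmaNu r s = nuSq r s := by
    rw [sigmaNu_eq, signedAffine_mul, nuSq_eq, ← signedAffine_one_one]
    norm_num
  exact h ▸ mul_mem sigmaNu_mem sigmaNu_mem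

lemma sigmaNu_mul_tau : sigmaNu r s * tau r s = signedAffine 1 (-1) 0 1 := by
  rw [sigmaNu_eq, tau_eq, signedAffine_mul]
  norm_num

lemma castHom_units_smul (hs : 2 ∣ s) (u : ℤˣ) (x : ZMod s) :
    ZMod.castHom hs (ZMod 2) (u • x) = ZMod.castHom hs (ZMod 2) x := by
  rcases Int.units_eq_one_or u with rfl | rfl <;>
    simp only [one_smul, Units.neg_smul, map_neg, ZMod.neg_eq_self_mod_two]

lemma neg_one_uzpow_eq_one_iff (x : ZMod 2) : (-1 : ℤˣ) ^ x = 1 ↔ x = 0 := by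
  rcases (by decide : ∀ y : ZMod 2, y = 0 ∨ y = 1) x with rfl | rfl
  · simp
  · simp only [uzpow_one]
    decide

-- The sign condition `ε η = (-1)^d` is the parity invariant `d ≡ [ε ≠ η] (mod 2)`.
lemma exists_signedAffine_of_mem_Hgroup (hs : 2 ∣ s) {g : Equiv.Perm (ZMod r × ZMod s)}
    (hg : g ∈ Hgroup r s) : ∃ (ε η : ℤˣ) (c : ZMod r) (d : ZMod s),
      g = signedAffine ε η c d ∧ ε * η = (-1) ^ ZMod.castHom hs (ZMod 2) d := by
  induction hg using Subgroup.closure_induction with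
  | mem x hx =>
    rcases hx with rfl | rfl | rfl
    · exact ⟨1, 1, 1, 0, mu_eq.trans (signedAffine_one_one 1 0).symm,
        by rw [map_zero, uzpow_zero, mul_one]⟩
    · exact ⟨-1, 1, 0, 1, sigmaNu_eq, by rw [map_one, uzpow_one, mul_one]⟩
    · exact ⟨-1, -1, 0, 0, tau_eq, by rw [map_zero, uzpow_zero, Int.units_mul_self]⟩
  | one => exact ⟨1, 1, 0, 0, by simp [signedAffine_one_one, Prod.mk_zero_zero], by simp⟩
  | mul x y _ _ hx hy =>
    obtain ⟨ε, η, c, d, rfl, h⟩ := hx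
    obtain ⟨ε', η', c', d', rfl, h'⟩ := hy
    refine ⟨ε * ε', η * η', _, _, signedAffine_mul .., ?_⟩
    rw [map_add, castHom_units_smul, uzpow_add, ← h, ← h']
    ac_rfl
  | inv x _ hx =>
    obtain ⟨ε, η, c, d, rfl, h⟩ := hx
    refine ⟨ε, η, _, _, signedAffine_inv .., ?_⟩
    rwa [map_neg, ZMod.neg_eq_self_mod_two, castHom_units_smul]

lemma normalIn_zpowers_muSq (hs : 2 ∣ s) :
    NormalIn (Subgroup.zpowers (muSq r s)) (Hgroup r s) := by
  refine normalIn_zpowers muSq_mem fun h hh => ?_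
  obtain ⟨ε, η, c, d, rfl, -⟩ := exists_signedAffine_of_mem_Hgroup hs hh
  refine Subgroup.mem_zpowers_iff.mpr ⟨ε, ?_⟩
  rw [muSq_eq, signedAffine_conj_addRight, Equiv.zsmul_addRight]
  simp [Units.smul_def]

lemma normalIn_zpowers_nuSq (hs : 2 ∣ s) :
    NormalIn (Subgroup.zpowers (nuSq r s)) (Hgroup r s) := by
  refine normalIn_zpowers nuSq_mem fun h hh => ?_
  obtain ⟨ε, η, c, d, rfl, -⟩ := exists_signedAffine_of_mem_Hgroup hs hh
  refine Subgroup.mem_zpowers_iff.mpr ⟨η, ?_⟩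
  rw [nuSq_eq, signedAffine_conj_addRight, Equiv.zsmul_addRight]
  simp [Units.smul_def]

lemma muSq_mem_of_signedAffine_mem {N : Subgroup (Equiv.Perm (ZMod r × ZMod s))}
    (hN : NormalIn N (Hgroup r s)) {η : ℤˣ} {c : ZMod r} {d : ZMod s}
    (hg : signedAffine (-1) η c d ∈ N) : muSq r s ∈ N := by
  have h := hN.commutatorElement_mem_left mu_mem hg
  rw [mu_eq, commutatorElement_addRight_signedAffine] at h
  rw [muSq_eq]
  convert h using 3 <;> norm_num

lemma addRight_four_mem_of_signedAffine_mem {N : Subgroup (Equiv.Perm (ZMod r × ZMod s))}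
    (hN : NormalIn N (Hgroup r s)) {ε : ℤˣ} {c : ZMod r} {d : ZMod s}
    (hg : signedAffine ε (-1) c d ∈ N) :
    Equiv.addRight ((0 : ZMod r), (2 * 2 : ZMod s)) ∈ N := by
  have h := hN.commutatorElement_mem_left nuSq_mem hg
  rw [nuSq_eq, commutatorElement_addRight_signedAffine] at h
  convert h using 3 <;> norm_num

lemma addRight_two_mul_mem_of_addRight_mem {N : Subgroup (Equiv.Perm (ZMod r × ZMod s))}
    (hN : NormalIn N (Hgroup r s)) {c : ZMod r} {d : ZMod s}
    (hg : Equiv.addRight (c, d) ∈ N) : Equiv.addRight ((0 : ZMod r), 2 * d) ∈ N := by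
  have h := hN.commutatorElement_mem_right (mul_mem sigmaNu_mem tau_mem) hg
  rw [sigmaNu_mul_tau, commutatorElement_addRight_signedAffine] at h
  convert h using 3 <;> simp [two_mul]

end Hgroup

section TwoP

variable {r p : ℕ}

lemma two_ne_zero_of_one_lt (hp : 1 < p) : (2 : ZMod (2 * p)) ≠ 0 := by
  intro h
  have := Nat.le_of_dvd two_pos ((ZMod.natCast_eq_zero_iff 2 (2 * p)).mp (by exact_mod_cast h))
  omega

lemma two_mul_ne_zero_of_castHom_eq_zero (hpo : Odd p) {d : ZMod (2 * p)} (hd : d ≠ 0)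
    (hχ : ZMod.castHom (dvd_mul_right 2 p) (ZMod 2) d = 0) : 2 * d ≠ 0 := by
  have : NeZero (2 * p) := ⟨by have := hpo.pos; omega⟩
  rw [← ZMod.natCast_zmod_val d] at hd hχ ⊢
  rw [map_natCast, ZMod.natCast_eq_zero_iff] at hχ
  rw [Ne, ZMod.natCast_eq_zero_iff] at hd
  intro h
  have hpd : p ∣ d.val :=
    Nat.dvd_of_mul_dvd_mul_left two_pos ((ZMod.natCast_eq_zero_iff _ _).mp (by exact_mod_cast h))
  exact hd ((Nat.coprime_two_left.mpr hpo).mul_dvd_of_dvd_of_dvd hχ hpd)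

lemma nuSq_ne_one (hp : 1 < p) : nuSq r (2 * p) ≠ 1 := by
  rw [nuSq_eq, Ne, addRight_eq_one_iff]
  simp [two_ne_zero_of_one_lt hp]

lemma orderOf_nuSq (hp : p.Prime) : orderOf (nuSq r (2 * p)) = p := by
  have := Fact.mk hp
  refine orderOf_eq_prime ?_ (nuSq_ne_one hp.one_lt)
  rw [nuSq_eq, Equiv.nsmul_addRight, addRight_eq_one_iff]
  simpa [mul_comm] using ZMod.natCast_self (2 * p)

lemma muSq_ne_one : muSq 4 s ≠ 1 := by
  rw [muSq_eq, Ne, addRight_eq_one_iff]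
  simp [show (2 : ZMod 4) ≠ 0 by decide]

lemma orderOf_muSq : orderOf (muSq 4 s) = 2 := by
  have := Fact.mk Nat.prime_two
  refine orderOf_eq_prime ?_ muSq_ne_one
  rw [muSq_eq, Equiv.nsmul_addRight, addRight_eq_one_iff]
  simp [show (2 • 2 : ZMod 4) = 0 by decide]

lemma nuSq_mem_of_addRight_mem (hp : p.Prime) (hpo : Odd p)
    {N : Subgroup (Equiv.Perm (ZMod r × ZMod (2 * p)))} {d : ZMod (2 * p)} (hd : d ≠ 0)
    (hχ : ZMod.castHom (dvd_mul_right 2 p) (ZMod 2) d = 0)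
    (h : Equiv.addRight ((0 : ZMod r), 2 * d) ∈ N) : nuSq r (2 * p) ∈ N := by
  have : NeZero (2 * p) := ⟨by have := hp.pos; omega⟩
  have hmem : Equiv.addRight ((0 : ZMod r), 2 * d) ∈ Subgroup.zpowers (nuSq r (2 * p)) :=
    ⟨d.val, by simp [nuSq_eq, mul_comm]⟩
  have hne : Equiv.addRight ((0 : ZMod r), 2 * d) ≠ 1 := by
    simp [addRight_eq_one_iff, two_mul_ne_zero_of_castHom_eq_zero hpo hd hχ]
  exact Subgroup.zpowers_le.mpr h
    (mem_zpowers_of_mem_zpowers ((orderOf_nuSq hp).symm ▸ hp) hmem hne)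

lemma muSq_mem_of_addRight_mem {N : Subgroup (Equiv.Perm (ZMod 4 × ZMod s))} {c : ZMod 4}
    (hc : c ≠ 0) (h : Equiv.addRight (c, (0 : ZMod s)) ∈ N) : muSq 4 s ∈ N := by
  have hpow : ∀ a : ZMod 4, a ≠ 0 → ∃ k : Fin 4, (k : ℕ) • a = 2 := by decide
  obtain ⟨k, hk⟩ := hpow c hc
  have := pow_mem h (k : ℕ)
  rwa [Equiv.nsmul_addRight, Prod.smul_mk, hk, smul_zero, ← muSq_eq] at this

lemma muSq_mem_or_nuSq_mem (hp : p.Prime) (hpo : Odd p)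
    {N : Subgroup (Equiv.Perm (ZMod 4 × ZMod (2 * p)))} (hN : NormalIn N (Hgroup 4 (2 * p)))
    (hbot : N ≠ ⊥) : muSq 4 (2 * p) ∈ N ∨ nuSq 4 (2 * p) ∈ N := by
  obtain ⟨g, hgN, hg1⟩ := (Subgroup.bot_or_exists_ne_one N).resolve_left hbot
  obtain ⟨ε, η, c, d, rfl, hpar⟩ :=
    exists_signedAffine_of_mem_Hgroup (dvd_mul_right 2 p) (hN.1 hgN)
  rcases Int.units_eq_one_or ε with rfl | rfl
  swap
  · exact .inl (muSq_mem_of_signedAffine_mem hN hgN)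
  rcases Int.units_eq_one_or η with rfl | rfl
  swap
  · have h2 : ZMod.castHom (dvd_mul_right 2 p) (ZMod 2) 2 = 0 := by rw [map_ofNat]; rfl
    exact .inr (nuSq_mem_of_addRight_mem hp hpo (two_ne_zero_of_one_lt hp.one_lt) h2
      (addRight_four_mem_of_signedAffine_mem hN hgN))
  rw [signedAffine_one_one] at hgN hg1
  by_cases hd : d = 0
  · subst hd
    exact .inl (muSq_mem_of_addRight_mem (by simpa [addRight_eq_one_iff] using hg1) hgN)
  · rw [mul_one, eq_comm, neg_one_uzpow_eq_one_iff] at hpar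
    exact .inr (nuSq_mem_of_addRight_mem hp hpo hd hpar
      (addRight_two_mul_mem_of_addRight_mem hN hgN))

end TwoP

/-- the minimal normal subgroups of `H(4,2p)` are exactly `⟨μ²⟩` and `⟨ν²⟩`. -/
theorem stmt18 (p : ℕ) (hp : p.Prime) (hpo : Odd p)
    (M : Subgroup (Equiv.Perm (ZMod 4 × ZMod (2 * p)))) :
    IsMinimalNormalIn M (Hgroup 4 (2 * p)) ↔
      (M = Subgroup.closure {muSq 4 (2 * p)} ∨ M = Subgroup.closure {nuSq 4 (2 * p)}) := by
  have hμ := normalIn_zpowers_muSq (r := 4) (dvd_mul_right 2 p)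
  have hν := normalIn_zpowers_nuSq (r := 4) (dvd_mul_right 2 p)
  simp only [← Subgroup.zpowers_eq_closure]
  constructor
  · intro hM
    rcases muSq_mem_or_nuSq_mem hp hpo hM.1 hM.2.1 with h | h
    · exact .inl (hM.eq_zpowers hμ h muSq_ne_one)
    · exact .inr (hM.eq_zpowers hν h (nuSq_ne_one hp.one_lt))
  · rintro (rfl | rfl)
    · exact isMinimalNormalIn_zpowers (orderOf_muSq.symm ▸ Nat.prime_two) hμ
    · exact isMinimalNormalIn_zpowers ((orderOf_nuSq hp).symm ▸ hp) hν

end OG4
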